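/- Let π be a secant plane and let l be a line of π with l ∉ S_π. Then the triple (|α(l)|, |β(l)|, |γ(l)|) equals ((q+1)/2, (q+1)/2, 0) or (q, 0, 1). -/

import Mathlib

/-!
Since `l ∉ S`, every line of `S_π` meets `l` in exactly one point, so the pencils of `S_π` at
the `q + 1` points of `l` partition `S_π` and their sizes add up to `q(q+1)/2`. Writing
`q = 2k + 1` and `a, b, c` for the numbers of points of `l` whose pencil has `k`, `k + 1`, `q`
lines, this gives `a + b + c = 2k + 2` and `ka + (k+1)b + qc = q(k+1)`, hence
`b + (k+1)c = k + 1`, which leaves only `c = 0, b = k + 1` and `c = 1, b = 0`.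
-/

open Submodule Set

/-- The points of `PG(3,q)`: the 1-dimensional subspaces of a 4-dimensional
vector space over the field `K` of order `q`. -/
def pgPoint (K : Type) [Field K] : Set (Submodule K (Fin 4 → K)) :=
  {W | Module.finrank K ↥W = 1}

/-- The lines of `PG(3,q)`: the 2-dimensional subspaces. -/
def pgLine (K : Type) [Field K] : Set (Submodule K (Fin 4 → K)) :=
  {W | Module.finrank K ↥W = 2}

/-- The planes of `PG(3,q)`: the 3-dimensional subspaces. -/
def pgPlane (K : Type) [Field K] : Set (Submodule K (Fin 4 → K)) :=
  {W | Module.finrank K ↥W = 3}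

/-- The lines of the family `S` passing through the point `p`. -/
def linesThru (K : Type) [Field K] (S : Set (Submodule K (Fin 4 → K)))
    (p : Submodule K (Fin 4 → K)) : Set (Submodule K (Fin 4 → K)) :=
  {l | l ∈ S ∧ p ≤ l}

/-- The lines of the family `S` contained in the plane `π` (the set `S_π`). -/
def linesIn (K : Type) [Field K] (S : Set (Submodule K (Fin 4 → K)))
    (π : Submodule K (Fin 4 → K)) : Set (Submodule K (Fin 4 → K)) :=
  {l | l ∈ S ∧ l ≤ π}

/-- The lines of `S_π` belonging to the pencil of lines of the plane `π`
through the point `p`. -/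
def pencilS (K : Type) [Field K] (S : Set (Submodule K (Fin 4 → K)))
    (p π : Submodule K (Fin 4 → K)) : Set (Submodule K (Fin 4 → K)) :=
  {l | l ∈ S ∧ p ≤ l ∧ l ≤ π}

/-- Property (P1): every point lies on exactly `q(q+1)/2` or exactly `q^2`
lines of `S`, and both numbers are attained. -/
def P1 (K : Type) [Field K] (S : Set (Submodule K (Fin 4 → K))) (q : ℕ) : Prop :=
  (∀ p ∈ pgPoint K, (linesThru K S p).ncard = q * (q + 1) / 2 ∨
      (linesThru K S p).ncard = q ^ 2) ∧
  (∃ p ∈ pgPoint K, (linesThru K S p).ncard = q * (q + 1) / 2) ∧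
  (∃ p ∈ pgPoint K, (linesThru K S p).ncard = q ^ 2)

/-- Property (P2): every plane contains exactly `q(q+1)/2` or exactly `q^2`
lines of `S`. -/
def P2 (K : Type) [Field K] (S : Set (Submodule K (Fin 4 → K))) (q : ℕ) : Prop :=
  ∀ π ∈ pgPlane K, (linesIn K S π).ncard = q * (q + 1) / 2 ∨
    (linesIn K S π).ncard = q ^ 2

/-- Property (P2a): if a plane contains `q^2` lines of `S`, then every pencil of
lines in that plane contains `0` or `q` lines of `S`. -/
def P2a (K : Type) [Field K] (S : Set (Submodule K (Fin 4 → K))) (q : ℕ) : Prop :=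
  ∀ π ∈ pgPlane K, (linesIn K S π).ncard = q ^ 2 →
    ∀ p ∈ pgPoint K, p ≤ π →
      (pencilS K S p π).ncard = 0 ∨ (pencilS K S p π).ncard = q

/-- Property (P2b): if a plane contains `q(q+1)/2` lines of `S`, then every
pencil of lines in that plane contains `(q-1)/2`, `(q+1)/2` or `q` lines of `S`. -/
def P2b (K : Type) [Field K] (S : Set (Submodule K (Fin 4 → K))) (q : ℕ) : Prop :=
  ∀ π ∈ pgPlane K, (linesIn K S π).ncard = q * (q + 1) / 2 →
    ∀ p ∈ pgPoint K, p ≤ π →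
      (pencilS K S p π).ncard = (q - 1) / 2 ∨
      (pencilS K S p π).ncard = (q + 1) / 2 ∨
      (pencilS K S p π).ncard = q

/-- A point is black if it lies on exactly `q^2` lines of `S`. -/
def IsBlack (K : Type) [Field K] (S : Set (Submodule K (Fin 4 → K))) (q : ℕ)
    (p : Submodule K (Fin 4 → K)) : Prop :=
  p ∈ pgPoint K ∧ (linesThru K S p).ncard = q ^ 2

/-- A plane is tangent if it contains exactly `q^2` lines of `S`. -/
def IsTangent (K : Type) [Field K] (S : Set (Submodule K (Fin 4 → K))) (q : ℕ)
    (π : Submodule K (Fin 4 → K)) : Prop :=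
  π ∈ pgPlane K ∧ (linesIn K S π).ncard = q ^ 2

/-- A plane is secant if it contains exactly `q(q+1)/2` lines of `S`. -/
def IsSecant (K : Type) [Field K] (S : Set (Submodule K (Fin 4 → K))) (q : ℕ)
    (π : Submodule K (Fin 4 → K)) : Prop :=
  π ∈ pgPlane K ∧ (linesIn K S π).ncard = q * (q + 1) / 2

/-- For a secant plane `π`, the set `α(π)` of points of `π` lying on exactly
`(q-1)/2` lines of `S_π`. -/
def alphaSet (K : Type) [Field K] (S : Set (Submodule K (Fin 4 → K))) (q : ℕ)
    (π : Submodule K (Fin 4 → K)) : Set (Submodule K (Fin 4 → K)) :=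
  {p | p ∈ pgPoint K ∧ p ≤ π ∧ (pencilS K S p π).ncard = (q - 1) / 2}

/-- For a secant plane `π`, the set `β(π)` of points of `π` lying on exactly
`(q+1)/2` lines of `S_π`. -/
def betaSet (K : Type) [Field K] (S : Set (Submodule K (Fin 4 → K))) (q : ℕ)
    (π : Submodule K (Fin 4 → K)) : Set (Submodule K (Fin 4 → K)) :=
  {p | p ∈ pgPoint K ∧ p ≤ π ∧ (pencilS K S p π).ncard = (q + 1) / 2}

/-- For a secant plane `π`, the set `γ(π)` of points of `π` lying on exactly
`q` lines of `S_π`. -/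
def gammaSet (K : Type) [Field K] (S : Set (Submodule K (Fin 4 → K))) (q : ℕ)
    (π : Submodule K (Fin 4 → K)) : Set (Submodule K (Fin 4 → K)) :=
  {p | p ∈ pgPoint K ∧ p ≤ π ∧ (pencilS K S p π).ncard = q}

open Module Finset

namespace Submodule

variable {K V : Type*} [Field K] [AddCommGroup V] [Module K V]

theorem ncard_finrank_one_le_of_finrank_eq_two [Finite K] {l : Submodule K V}
    (hl : finrank K l = 2) :
    {p : Submodule K V | finrank K p = 1 ∧ p ≤ l}.ncard = Nat.card K + 1 := by
  have himage : {p : Submodule K V | finrank K p = 1 ∧ p ≤ l} =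
      map l.subtype '' {H : Submodule K l | finrank K H = 1} := by
    ext p
    refine ⟨fun ⟨hp, hpl⟩ => ⟨comap l.subtype p, ?_, ?_⟩, ?_⟩
    · rwa [Set.mem_ofPred_eq, ← finrank_map_subtype_eq, map_comap_subtype, inf_eq_right.mpr hpl]
    · rw [map_comap_subtype, inf_eq_right.mpr hpl]
    · rintro ⟨H, hH, rfl⟩
      exact ⟨(finrank_map_subtype_eq l H).trans hH, map_subtype_le l H⟩
  rw [himage, Set.ncard_image_of_injective _ (map_injective_of_injective l.injective_subtype),
    ← Nat.card_coe_set_eq]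
  show Nat.card {H : Submodule K l // finrank K H = 1} = _
  rw [← Nat.card_congr (Projectivization.equivSubmodule K l)]
  exact Projectivization.card_of_finrank_two K l hl

theorem finrank_inf_eq_one_of_le [FiniteDimensional K V] {π l m : Submodule K V}
    (hπ : finrank K π = 3) (hl : finrank K l = 2) (hm : finrank K m = 2)
    (hlπ : l ≤ π) (hmπ : m ≤ π) (hne : m ≠ l) : finrank K ↥(m ⊓ l) = 1 := by
  have hsum := finrank_sup_add_finrank_inf_eq m l
  have hsup : finrank K ↥(m ⊔ l) ≤ 3 := hπ ▸ finrank_mono (sup_le hmπ hlπ)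
  have hinf : finrank K ↥(m ⊓ l) < 2 := by
    refine hl ▸ finrank_lt_finrank_of_lt (lt_of_le_of_ne inf_le_right fun h => hne ?_)
    exact (eq_of_le_of_finrank_eq (inf_eq_right.mp h) (by rw [hl, hm])).symm
  omega

end Submodule

theorem card_filter_eq_of_sum_eq {ι : Type*} (s : Finset ι) (f : ι → ℕ) {q : ℕ} (hq : Odd q)
    (hq1 : 1 < q) (hs : #s = q + 1)
    (hf : ∀ x ∈ s, f x = (q - 1) / 2 ∨ f x = (q + 1) / 2 ∨ f x = q)
    (hsum : ∑ x ∈ s, f x = q * (q + 1) / 2) :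
    (#{x ∈ s | f x = (q - 1) / 2} = (q + 1) / 2 ∧ #{x ∈ s | f x = (q + 1) / 2} = (q + 1) / 2 ∧
        #{x ∈ s | f x = q} = 0) ∨
      (#{x ∈ s | f x = (q - 1) / 2} = q ∧ #{x ∈ s | f x = (q + 1) / 2} = 0 ∧
        #{x ∈ s | f x = q} = 1) := by
  obtain ⟨k, rfl⟩ := hq
  have hk : 1 ≤ k := by omega
  have hlow : (2 * k + 1 - 1) / 2 = k := by omega
  have hhigh : (2 * k + 1 + 1) / 2 = k + 1 := by omega
  have htotal : (2 * k + 1) * (2 * k + 1 + 1) / 2 = (2 * k + 1) * (k + 1) :=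
    Nat.div_eq_of_eq_mul_left two_pos (by ring)
  simp only [hlow, hhigh, htotal] at hf hsum ⊢
  set a := #{x ∈ s | f x = k}
  set b := #{x ∈ s | f x = k + 1}
  set c := #{x ∈ s | f x = 2 * k + 1}
  have hone : ∀ x ∈ s, 1 = (if f x = k then 1 else 0) + (if f x = k + 1 then 1 else 0) +
      (if f x = 2 * k + 1 then 1 else 0) := by
    intro x hx
    rcases hf x hx with h | h | h <;> simp [h] <;> omega
  have hval : ∀ x ∈ s, f x = k * (if f x = k then 1 else 0) +
      (k + 1) * (if f x = k + 1 then 1 else 0) +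
      (2 * k + 1) * (if f x = 2 * k + 1 then 1 else 0) := by
    intro x hx
    rcases hf x hx with h | h | h <;> simp [h] <;> omega
  have hcard : a + b + c = 2 * k + 2 := by
    rw [← hs, card_eq_sum_ones, sum_congr rfl hone, sum_add_distrib, sum_add_distrib]
    simp only [a, b, c, card_filter]
  have hweight : k * a + (k + 1) * b + (2 * k + 1) * c = (2 * k + 1) * (k + 1) := by
    rw [← hsum, sum_congr rfl hval, sum_add_distrib, sum_add_distrib, ← mul_sum, ← mul_sum,
      ← mul_sum]
    simp only [a, b, c, card_filter]
  have hbc : b + (k + 1) * c = k + 1 := by nlinarith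
  have hc : c ≤ 1 := by nlinarith
  interval_cases c <;> omega

section PointsOnLine

variable {K : Type} [Field K] [Fintype K]

noncomputable def pointsOn (l : Submodule K (Fin 4 → K)) : Finset (Submodule K (Fin 4 → K)) :=
  (Set.toFinite {p | p ∈ pgPoint K ∧ p ≤ l}).toFinset

theorem mem_pointsOn {l p : Submodule K (Fin 4 → K)} :
    p ∈ pointsOn l ↔ p ∈ pgPoint K ∧ p ≤ l :=
  Set.Finite.mem_toFinset _

theorem card_pointsOn {l : Submodule K (Fin 4 → K)} (hl : l ∈ pgLine K) :
    #(pointsOn l) = Fintype.card K + 1 := by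
  rw [pointsOn, ← Set.ncard_eq_toFinset_card, ← Nat.card_eq_fintype_card]
  exact ncard_finrank_one_le_of_finrank_eq_two hl

theorem ncard_linesIn_eq_sum_ncard_pencilS {S : Set (Submodule K (Fin 4 → K))}
    (hS : S ⊆ pgLine K) {π l : Submodule K (Fin 4 → K)} (hπ : π ∈ pgPlane K) (hl : l ∈ pgLine K)
    (hlS : l ∉ S) (hlπ : l ≤ π) :
    (linesIn K S π).ncard = ∑ p ∈ pointsOn l, (pencilS K S p π).ncard := by
  classical
  have hmeet : ∀ m ∈ linesIn K S π, m ⊓ l ∈ pgPoint K := fun m ⟨hmS, hmπ⟩ =>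
    finrank_inf_eq_one_of_le hπ hl (hS hmS) hlπ hmπ (by rintro rfl; exact hlS hmS)
  have hmaps : Set.MapsTo (· ⊓ l) (Set.toFinite (linesIn K S π)).toFinset (pointsOn l) :=
    fun m hm => by
      rw [mem_coe, Set.Finite.mem_toFinset] at hm
      exact mem_pointsOn.mpr ⟨hmeet m hm, inf_le_right⟩
  rw [Set.ncard_eq_toFinset_card _ (Set.toFinite _), card_eq_sum_card_fiberwise hmaps]
  refine sum_congr rfl fun p hp => ?_
  rw [← Set.ncard_coe_finset]
  congr 1
  ext m
  simp only [coe_filter, Set.Finite.mem_toFinset, Set.mem_ofPred_eq, pencilS]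
  constructor
  · rintro ⟨hm, rfl⟩
    exact ⟨hm.1, inf_le_left, hm.2⟩
  · rintro ⟨hmS, hpm, hmπ⟩
    obtain ⟨hp, hpl⟩ := mem_pointsOn.mp hp
    refine ⟨⟨hmS, hmπ⟩, (eq_of_le_of_finrank_eq (le_inf hpm hpl) ?_).symm⟩
    rw [hp, hmeet m ⟨hmS, hmπ⟩]

-- `α(l)`, `β(l)` and `γ(l)` unfold to the left-hand side.
theorem ncard_setOf_pencilS_eq_card_filter (S : Set (Submodule K (Fin 4 → K)))
    {π l : Submodule K (Fin 4 → K)} (hlπ : l ≤ π) (v : ℕ) :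
    {p | (p ∈ pgPoint K ∧ p ≤ π ∧ (pencilS K S p π).ncard = v) ∧ p ≤ l}.ncard =
      #{p ∈ pointsOn l | (pencilS K S p π).ncard = v} := by
  classical
  rw [← Set.ncard_coe_finset, coe_filter]
  congr 1
  ext p
  simp only [mem_pointsOn, Set.mem_ofPred_eq]
  exact ⟨fun ⟨⟨hp, _, hv⟩, hpl⟩ => ⟨⟨hp, hpl⟩, hv⟩,
    fun ⟨⟨hp, hpl⟩, hv⟩ => ⟨⟨hp, hpl.trans hlπ, hv⟩, hpl⟩⟩

end PointsOnLine

theorem stmt_7_general (K : Type) [Field K] [Fintype K] (q : ℕ) (hq : Fintype.card K = q)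
    (hq_odd : Odd q) (S : Set (Submodule K (Fin 4 → K))) (hS : S ⊆ pgLine K)
    (h2b : P2b K S q) :
    ∀ π, IsSecant K S q π → ∀ l ∈ pgLine K, l ∉ S → l ≤ π →
      (({p | p ∈ alphaSet K S q π ∧ p ≤ l}.ncard = (q + 1) / 2 ∧
        {p | p ∈ betaSet K S q π ∧ p ≤ l}.ncard = (q + 1) / 2 ∧
        {p | p ∈ gammaSet K S q π ∧ p ≤ l}.ncard = 0) ∨
       ({p | p ∈ alphaSet K S q π ∧ p ≤ l}.ncard = q ∧
        {p | p ∈ betaSet K S q π ∧ p ≤ l}.ncard = 0 ∧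
        {p | p ∈ gammaSet K S q π ∧ p ≤ l}.ncard = 1)) := by
  rintro π ⟨hπ, hπS⟩ l hl hlS hlπ
  have hq1 : 1 < q := hq ▸ Fintype.one_lt_card
  have hpencils : ∀ p ∈ pointsOn l, (pencilS K S p π).ncard = (q - 1) / 2 ∨
      (pencilS K S p π).ncard = (q + 1) / 2 ∨ (pencilS K S p π).ncard = q := fun p hp =>
    have ⟨hp, hpl⟩ := mem_pointsOn.mp hp
    h2b π hπ hπS p hp (hpl.trans hlπ)
  have hsum := (ncard_linesIn_eq_sum_ncard_pencilS hS hπ hl hlS hlπ).symm.trans hπS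
  simp only [alphaSet, betaSet, gammaSet, Set.mem_ofPred_eq,
    ncard_setOf_pencilS_eq_card_filter S hlπ]
  exact card_filter_eq_of_sum_eq _ _ hq_odd hq1 (hq ▸ card_pointsOn hl) hpencils hsum

/-- For a secant plane `π` and a line `l` of `π` with `l ∉ S_π`,
the triple `(|α(l)|, |β(l)|, |γ(l)|)` equals `((q+1)/2, (q+1)/2, 0)` or
`(q, 0, 1)`. -/
theorem stmt_7 (K : Type) [Field K] [Fintype K] (q : ℕ) (hq : Fintype.card K = q)
    (hq_odd : Odd q) (S : Set (Submodule K (Fin 4 → K))) (hS : S ⊆ pgLine K)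
    (h1 : P1 K S q) (h2 : P2 K S q) (h2a : P2a K S q) (h2b : P2b K S q) :
    ∀ π, IsSecant K S q π → ∀ l ∈ pgLine K, l ∉ S → l ≤ π →
      (({p | p ∈ alphaSet K S q π ∧ p ≤ l}.ncard = (q + 1) / 2 ∧
        {p | p ∈ betaSet K S q π ∧ p ≤ l}.ncard = (q + 1) / 2 ∧
        {p | p ∈ gammaSet K S q π ∧ p ≤ l}.ncard = 0) ∨
       ({p | p ∈ alphaSet K S q π ∧ p ≤ l}.ncard = q ∧
        {p | p ∈ betaSet K S q π ∧ p ≤ l}.ncard = 0 ∧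
        {p | p ∈ gammaSet K S q π ∧ p ≤ l}.ncard = 1)) :=
  stmt_7_general K q hq hq_odd S hS h2b
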